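/- arXiv:1206.1425 — 3 statements merged into one kernel-verified Lean document; each statement's English description precedes it below -/
import Mathlib

section
/- Grouping effect (Theorem 1, general form used in its proof): Let n, p ≥ 1, let F : ℝ^n → ℝ be an arbitrary function, let φ : ℝ → ℝ be strictly convex, and let X be an n×p real matrix whose l-th and k-th columns are equal for some indices l ≠ k. If β̂ ∈ ℝ^p is a global minimizer over ℝ^p of the objective G(β) = F(X β) + Σ_{j=1}^p φ(β_j), then β̂_l = β̂_k. -/
/-!
Swapping the coordinates `l` and `k` of `β̂` changes neither `X β̂` (the two columns agree)
nor the separable penalty. Averaging `β̂` with its swap therefore keeps `X β̂`, while strict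
convexity of `φ` makes the penalty strictly smaller as soon as `β̂ l ≠ β̂ k`, contradicting
minimality.
-/

open Finset Set Matrix

theorem strictConvexOn_univ_of_forall_lt {φ : ℝ → ℝ}
    (h : ∀ a b : ℝ, a ≠ b → ∀ t : ℝ, 0 < t → t < 1 →
      φ (t * a + (1 - t) * b) < t * φ a + (1 - t) * φ b) :
    StrictConvexOn ℝ univ φ := by
  refine ⟨convex_univ, fun a _ b _ hab s t hs ht hst => ?_⟩
  obtain rfl : t = 1 - s := by linarith
  exact h a b hab s hs (by linarith)

theorem ConvexOn.map_add_div_two_le {φ : ℝ → ℝ} (hφ : ConvexOn ℝ univ φ) (x y : ℝ) :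
    φ ((x + y) / 2) ≤ (φ x + φ y) / 2 := by
  have := hφ.2 (mem_univ x) (mem_univ y) (by norm_num : (0 : ℝ) ≤ 1 / 2)
    (by norm_num : (0 : ℝ) ≤ 1 / 2) (by norm_num)
  simp only [smul_eq_mul] at this
  rw [show (x + y) / 2 = 1 / 2 * x + 1 / 2 * y by ring]
  linarith

theorem StrictConvexOn.map_add_div_two_lt {φ : ℝ → ℝ} (hφ : StrictConvexOn ℝ univ φ)
    {x y : ℝ} (hxy : x ≠ y) : φ ((x + y) / 2) < (φ x + φ y) / 2 := by
  have := hφ.2 (mem_univ x) (mem_univ y) hxy (by norm_num : (0 : ℝ) < 1 / 2)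
    (by norm_num : (0 : ℝ) < 1 / 2) (by norm_num)
  simp only [smul_eq_mul] at this
  rw [show (x + y) / 2 = 1 / 2 * x + 1 / 2 * y by ring]
  linarith

theorem sum_map_add_comp_perm_div_two_lt {ι : Type*} [Fintype ι] {φ : ℝ → ℝ}
    (hφ : StrictConvexOn ℝ univ φ) (σ : Equiv.Perm ι) {β : ι → ℝ} {i : ι}
    (hi : β i ≠ β (σ i)) :
    ∑ j, φ ((β j + β (σ j)) / 2) < ∑ j, φ (β j) :=
  calc ∑ j, φ ((β j + β (σ j)) / 2)
      < ∑ j, (φ (β j) + φ (β (σ j))) / 2 :=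
        sum_lt_sum (fun j _ => hφ.convexOn.map_add_div_two_le _ _)
          ⟨i, mem_univ i, hφ.map_add_div_two_lt hi⟩
    _ = ∑ j, φ (β j) := by
        rw [← sum_div, sum_add_distrib, Equiv.sum_comp σ (fun j => φ (β j))]
        ring

theorem Matrix.mulVec_comp_perm {m n R : Type*} [Fintype n] [NonUnitalNonAssocSemiring R]
    (X : Matrix m n R) (σ : Equiv.Perm n) (hX : ∀ i j, X i (σ j) = X i j) (β : n → R) :
    X *ᵥ (β ∘ σ) = X *ᵥ β := by
  ext i
  simp only [mulVec, dotProduct]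
  conv_lhs => enter [2, j]; rw [← hX i j]
  exact Equiv.sum_comp σ (fun j => X i j * β j)

theorem grouping_effect_general_general
    (n p : ℕ)
    (F : (Fin n → ℝ) → ℝ) (φ : ℝ → ℝ)
    (hφ : ∀ a b : ℝ, a ≠ b → ∀ t : ℝ, 0 < t → t < 1 →
      φ (t * a + (1 - t) * b) < t * φ a + (1 - t) * φ b)
    (X : Matrix (Fin n) (Fin p) ℝ) (l k : Fin p)
    (hcol : ∀ i : Fin n, X i l = X i k)
    (βhat : Fin p → ℝ)
    (hmin : ∀ β : Fin p → ℝ,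
      F (X.mulVec βhat) + ∑ j, φ (βhat j) ≤ F (X.mulVec β) + ∑ j, φ (β j)) :
    βhat l = βhat k := by
  by_contra hne
  set σ := Equiv.swap l k
  have hXσ : X.mulVec (βhat ∘ σ) = X.mulVec βhat :=
    X.mulVec_comp_perm σ (fun i => Equiv.apply_swap_eq_self (hcol i)) βhat
  have hX : X.mulVec (fun j => (βhat j + βhat (σ j)) / 2) = X.mulVec βhat := by
    have hβ : (fun j => (βhat j + βhat (σ j)) / 2) = (2 : ℝ)⁻¹ • (βhat + βhat ∘ σ) := by
      ext j; simp only [Pi.smul_apply, Pi.add_apply, Function.comp_apply, smul_eq_mul]; ring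
    rw [hβ, mulVec_smul, mulVec_add, hXσ, ← two_smul ℝ, smul_smul]
    norm_num
  have hpen := sum_map_add_comp_perm_div_two_lt (strictConvexOn_univ_of_forall_lt hφ) σ
    (i := l) (by rwa [Equiv.swap_apply_left])
  have hle := hmin (fun j => (βhat j + βhat (σ j)) / 2)
  rw [hX] at hle
  linarith

/-- Grouping effect (general form): if the `l`-th and `k`-th columns of `X` coincide
and the penalty `φ` is strictly convex, then any global minimizer of
`β ↦ F (X β) + ∑ j, φ (β j)` satisfies `β̂ l = β̂ k`. -/
theorem grouping_effect_general
    (n p : ℕ) (hn : 1 ≤ n) (hp : 1 ≤ p)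
    (F : (Fin n → ℝ) → ℝ) (φ : ℝ → ℝ)
    (hφ : ∀ a b : ℝ, a ≠ b → ∀ t : ℝ, 0 < t → t < 1 →
      φ (t * a + (1 - t) * b) < t * φ a + (1 - t) * φ b)
    (X : Matrix (Fin n) (Fin p) ℝ) (l k : Fin p) (hlk : l ≠ k)
    (hcol : ∀ i : Fin n, X i l = X i k)
    (βhat : Fin p → ℝ)
    (hmin : ∀ β : Fin p → ℝ,
      F (X.mulVec βhat) + ∑ j, φ (βhat j) ≤ F (X.mulVec β) + ∑ j, φ (β j)) :
    βhat l = βhat k :=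
  grouping_effect_general_general n p F φ hφ X l k hcol βhat hmin
end

section
/- Grouping effect for the elastic net penalty: Let n, p ≥ 1, let F : ℝ^n → ℝ be an arbitrary function, let λ1 ≥ 0 and λ2 > 0, and let X be an n×p real matrix whose l-th and k-th columns are equal for some indices l ≠ k. If β̂ ∈ ℝ^p is a global minimizer over ℝ^p of G(β) = F(X β) + Σ_{j=1}^p ( λ1·|β_j| + λ2·β_j² ), then β̂_l = β̂_k. -/
/-!
Swapping the coordinates `l` and `k` changes neither `X β` (the two columns agree) nor the
penalty, so `β̂ ∘ swap l k` is again a minimizer. The elastic-net penalty is `λ₂`-strongly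
convex: at the midpoint of `β̂` and `β̂ ∘ swap l k`, where `X β` is unchanged, it lies at least
`λ₂ / 4 · ‖β̂ - β̂ ∘ swap l k‖²` below the common value. Minimality of `β̂` forces this gap to
vanish, i.e. `β̂ = β̂ ∘ swap l k`.
-/

open Matrix

theorem submatrix_swap_eq_of_col_eq {m ι R : Type*} [DecidableEq ι] (X : Matrix m ι R) {l k : ι}
    (hcol : ∀ i, X i l = X i k) : X.submatrix id (Equiv.swap l k) = X := by
  ext i j
  rcases eq_or_ne j l with rfl | hl
  · simp [hcol]
  rcases eq_or_ne j k with rfl | hk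
  · simp [hcol]
  · simp [Equiv.swap_apply_of_ne_of_ne hl hk]

variable {m ι : Type*} [Fintype ι]

def elasticNetPenalty (lam1 lam2 : ℝ) (β : ι → ℝ) : ℝ :=
  ∑ j, (lam1 * |β j| + lam2 * β j ^ 2)

theorem elasticNetPenalty_comp_perm (lam1 lam2 : ℝ) (β : ι → ℝ) (σ : Equiv.Perm ι) :
    elasticNetPenalty lam1 lam2 (β ∘ σ) = elasticNetPenalty lam1 lam2 β :=
  Equiv.sum_comp σ fun j => lam1 * |β j| + lam2 * β j ^ 2

theorem elasticNetPenalty_midpoint_le {lam1 : ℝ} (hlam1 : 0 ≤ lam1) (lam2 : ℝ) (β γ : ι → ℝ) :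
    elasticNetPenalty lam1 lam2 (midpoint ℝ β γ) ≤
      (elasticNetPenalty lam1 lam2 β + elasticNetPenalty lam1 lam2 γ) / 2
        - lam2 / 4 * ∑ j, (β j - γ j) ^ 2 := by
  simp only [elasticNetPenalty, ← Finset.sum_add_distrib, Finset.sum_div, Finset.mul_sum,
    ← Finset.sum_sub_distrib]
  refine Finset.sum_le_sum fun j _ => ?_
  have hmid : midpoint ℝ β γ j = (β j + γ j) / 2 := by
    rw [pi_midpoint_apply, midpoint_eq_smul_add, invOf_eq_inv, smul_eq_mul]; ring
  have habs : |(β j + γ j) / 2| ≤ (|β j| + |γ j|) / 2 := by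
    rw [abs_div, abs_two]; gcongr; exact abs_add_le _ _
  rw [hmid]
  -- `((a + b) / 2) ^ 2 = (a ^ 2 + b ^ 2) / 2 - (a - b) ^ 2 / 4`
  nlinarith [mul_le_mul_of_nonneg_left habs hlam1]

theorem mulVec_comp_perm_of_submatrix_eq {R : Type*} [NonUnitalNonAssocSemiring R]
    (X : Matrix m ι R) {σ : Equiv.Perm ι}
    (hX : X.submatrix id σ = X) (β : ι → R) : X *ᵥ (β ∘ σ) = X *ᵥ β := by
  have h := submatrix_mulVec_equiv X (β ∘ σ) id σ
  rw [hX] at h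
  rw [h, Function.comp_assoc, Equiv.self_comp_symm, Function.comp_id, Function.comp_id]

theorem comp_perm_eq_of_forall_elasticNet_le {F : (m → ℝ) → ℝ} {lam1 lam2 : ℝ}
    (hlam1 : 0 ≤ lam1) (hlam2 : 0 < lam2) {X : Matrix m ι ℝ} {σ : Equiv.Perm ι}
    (hX : X.submatrix id σ = X) {βhat : ι → ℝ}
    (hmin : ∀ β, F (X *ᵥ βhat) + elasticNetPenalty lam1 lam2 βhat ≤
      F (X *ᵥ β) + elasticNetPenalty lam1 lam2 β) :
    βhat ∘ σ = βhat := by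
  set γ := βhat ∘ σ
  have hXγ : X *ᵥ γ = X *ᵥ βhat := mulVec_comp_perm_of_submatrix_eq X hX βhat
  have hXmid : X *ᵥ midpoint ℝ βhat γ = X *ᵥ βhat := by
    have h := X.mulVecLin.toAffineMap.map_midpoint βhat γ
    simp only [LinearMap.coe_toAffineMap, mulVecLin_apply] at h
    rw [h, hXγ, midpoint_self]
  have hle := hmin (midpoint ℝ βhat γ)
  rw [hXmid, add_le_add_iff_left] at hle
  have hconv := elasticNetPenalty_midpoint_le hlam1 lam2 βhat γ
  rw [elasticNetPenalty_comp_perm] at hconv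
  have hsum : ∑ j, (βhat j - γ j) ^ 2 = 0 :=
    le_antisymm (by nlinarith) (Finset.sum_nonneg fun j _ => sq_nonneg _)
  funext j
  have := (Finset.sum_eq_zero_iff_of_nonneg fun j _ => sq_nonneg _).mp hsum j (Finset.mem_univ j)
  exact (sub_eq_zero.mp (pow_eq_zero_iff two_ne_zero |>.mp this)).symm

theorem grouping_effect_elastic_net_general
    (n p : ℕ)
    (F : (Fin n → ℝ) → ℝ) (lam1 lam2 : ℝ) (hlam1 : 0 ≤ lam1) (hlam2 : 0 < lam2)
    (X : Matrix (Fin n) (Fin p) ℝ) (l k : Fin p)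
    (hcol : ∀ i : Fin n, X i l = X i k)
    (βhat : Fin p → ℝ)
    (hmin : ∀ β : Fin p → ℝ,
      F (X.mulVec βhat) + ∑ j, (lam1 * |βhat j| + lam2 * (βhat j) ^ 2)
        ≤ F (X.mulVec β) + ∑ j, (lam1 * |β j| + lam2 * (β j) ^ 2)) :
    βhat l = βhat k := by
  have hswap : βhat ∘ Equiv.swap l k = βhat :=
    comp_perm_eq_of_forall_elasticNet_le hlam1 hlam2 (submatrix_swap_eq_of_col_eq X hcol) hmin
  simpa using (congrFun hswap l).symm

/-- Grouping effect for the elastic net penalty. -/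
theorem grouping_effect_elastic_net
    (n p : ℕ) (hn : 1 ≤ n) (hp : 1 ≤ p)
    (F : (Fin n → ℝ) → ℝ) (lam1 lam2 : ℝ) (hlam1 : 0 ≤ lam1) (hlam2 : 0 < lam2)
    (X : Matrix (Fin n) (Fin p) ℝ) (l k : Fin p) (hlk : l ≠ k)
    (hcol : ∀ i : Fin n, X i l = X i k)
    (βhat : Fin p → ℝ)
    (hmin : ∀ β : Fin p → ℝ,
      F (X.mulVec βhat) + ∑ j, (lam1 * |βhat j| + lam2 * (βhat j) ^ 2)
        ≤ F (X.mulVec β) + ∑ j, (lam1 * |β j| + lam2 * (β j) ^ 2)) :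
    βhat l = βhat k :=
  grouping_effect_elastic_net_general n p F lam1 lam2 hlam1 hlam2 X l k hcol βhat hmin
end

section
/- Grouping effect for the SCAD_L2 penalty: Let n, p ≥ 1, let F : ℝ^n → ℝ be an arbitrary function, let λ2 > 1/(2(a−1)), and let X be an n×p real matrix whose l-th and k-th columns are equal for some indices l ≠ k. If β̂ ∈ ℝ^p is a global minimizer over ℝ^p of G(β) = F(X β) + Σ_{j=1}^p ( λ1·f_SCAD(|β_j|) + λ2·β_j² ), then β̂_l = β̂_k. -/
open intervalIntegral

/-- The SCAD function `f_SCAD(θ) = ∫₀^θ ( 1_{t ≤ λ1} + ((a·λ1 − t)₊/((a−1)·λ1))·1_{t > λ1} ) dt`. -/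
noncomputable def fSCAD (a lam1 : ℝ) (θ : ℝ) : ℝ :=
  ∫ t in (0:ℝ)..θ,
    (if t ≤ lam1 then (1:ℝ) else 0) + (max (a * lam1 - t) 0 / ((a - 1) * lam1)) * (if lam1 < t then (1:ℝ) else 0)

/-!
Subtracting `θ² / (2(a-1))` from the penalty `λ1 f_SCAD(|θ|) + λ2 θ²` leaves a positive multiple
of `θ²`, while `φ(u) = λ1 f_SCAD(u) + u² / (2(a-1))` is convex and nondecreasing on `[0, ∞)`:
its derivative `min (λ1 + u/(a-1)) (max (aλ1) u / (a-1))` is monotone. So the penalty is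
strictly convex. If the columns `l` and `k` of `X` agree, swapping `β̂ l` and `β̂ k` does not change
`X β̂` or the penalty, and averaging `β̂` with its swap would then strictly lower `G` unless
`β̂ l = β̂ k`.
-/

open Set Matrix

noncomputable def scadDeriv (a lam1 t : ℝ) : ℝ :=
  min 1 (max (a * lam1 - t) 0 / ((a - 1) * lam1))

section SCAD

variable {a lam1 : ℝ}

lemma continuous_scadDeriv : Continuous (scadDeriv a lam1) := by
  unfold scadDeriv
  fun_prop

lemma scad_integrand_eq_scadDeriv (ha : 1 < a) (hlam1 : 0 < lam1) (t : ℝ) :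
    (if t ≤ lam1 then (1:ℝ) else 0)
      + (max (a * lam1 - t) 0 / ((a - 1) * lam1)) * (if lam1 < t then (1:ℝ) else 0)
      = scadDeriv a lam1 t := by
  have hc : 0 < (a - 1) * lam1 := mul_pos (by linarith) hlam1
  unfold scadDeriv
  by_cases h : t ≤ lam1
  · have h1 : 1 ≤ max (a * lam1 - t) 0 / ((a - 1) * lam1) := by
      rw [le_div_iff₀ hc]
      exact le_max_of_le_left (by linarith)
    simp [h, not_lt.2 h, min_eq_left h1]
  · have h1 : max (a * lam1 - t) 0 / ((a - 1) * lam1) ≤ 1 := by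
      rw [div_le_one hc]
      exact max_le (by linarith) hc.le
    simp [h, not_le.1 h, min_eq_right h1]

lemma hasDerivAt_fSCAD (ha : 1 < a) (hlam1 : 0 < lam1) (θ : ℝ) :
    HasDerivAt (fSCAD a lam1) (scadDeriv a lam1 θ) θ := by
  have hfSCAD : fSCAD a lam1 = fun θ => ∫ t in (0:ℝ)..θ, scadDeriv a lam1 t := by
    funext θ
    exact integral_congr fun t _ => scad_integrand_eq_scadDeriv ha hlam1 t
  rw [hfSCAD]
  exact (continuous_scadDeriv.integral_hasStrictDerivAt 0 θ).hasDerivAt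

lemma mul_scadDeriv_add_div (ha : 1 < a) (hlam1 : 0 < lam1) (t : ℝ) :
    lam1 * scadDeriv a lam1 t + t / (a - 1)
      = min (lam1 + t / (a - 1)) (max (a * lam1) t / (a - 1)) := by
  have ha1 : 0 < a - 1 := by linarith
  have hmul : lam1 * (max (a * lam1 - t) 0 / ((a - 1) * lam1))
      = max (a * lam1 - t) 0 / (a - 1) := by
    field_simp
  rw [scadDeriv, mul_min_of_nonneg _ _ hlam1.le, mul_one, hmul, ← min_add_add_right, ← add_div,
    ← max_add_add_right, sub_add_cancel, zero_add]

lemma hasDerivAt_scad_add_sq (ha : 1 < a) (hlam1 : 0 < lam1) (u : ℝ) :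
    HasDerivAt (fun u => lam1 * fSCAD a lam1 u + u ^ 2 / (2 * (a - 1)))
      (min (lam1 + u / (a - 1)) (max (a * lam1) u / (a - 1))) u := by
  have hsq : HasDerivAt (fun u : ℝ => u ^ 2 / (2 * (a - 1))) (u / (a - 1)) u :=
    ((hasDerivAt_pow 2 u).div_const (2 * (a - 1))).congr_deriv (by
      have : a - 1 ≠ 0 := by linarith
      field_simp
      norm_num)
  rw [← mul_scadDeriv_add_div ha hlam1]
  exact ((hasDerivAt_fSCAD ha hlam1 u).const_mul lam1).add hsq

lemma convexOn_scad_add_sq (ha : 1 < a) (hlam1 : 0 < lam1) :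
    ConvexOn ℝ univ (fun u => lam1 * fSCAD a lam1 u + u ^ 2 / (2 * (a - 1))) := by
  have ha1 : 0 < a - 1 := by linarith
  refine Monotone.convexOn_univ_of_deriv
    (fun u => (hasDerivAt_scad_add_sq ha hlam1 u).differentiableAt) ?_
  rw [funext fun u => (hasDerivAt_scad_add_sq ha hlam1 u).deriv]
  intro x y hxy
  dsimp only
  gcongr

lemma monotoneOn_scad_add_sq (ha : 1 < a) (hlam1 : 0 < lam1) :
    MonotoneOn (fun u => lam1 * fSCAD a lam1 u + u ^ 2 / (2 * (a - 1))) (Ici 0) := by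
  have ha1 : 0 < a - 1 := by linarith
  refine monotoneOn_of_hasDerivWithinAt_nonneg (convex_Ici 0) ?_
    (fun u _ => (hasDerivAt_scad_add_sq ha hlam1 u).hasDerivWithinAt) ?_
  · exact fun u _ => (hasDerivAt_scad_add_sq ha hlam1 u).continuousAt.continuousWithinAt
  · intro u hu
    rw [interior_Ici] at hu
    have hu : 0 < u := hu
    exact le_min (by positivity) (div_nonneg (le_max_of_le_right hu.le) ha1.le)

end SCAD

lemma strictConvexOn_const_mul_sq {c : ℝ} (hc : 0 < c) :
    StrictConvexOn ℝ univ (fun x : ℝ => c * x ^ 2) := by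
  refine ⟨convex_univ, fun x _ y _ hxy s t hs ht hst => ?_⟩
  have hsq : 0 < (x - y) ^ 2 := by positivity [sub_ne_zero.2 hxy]
  obtain rfl : t = 1 - s := by linarith
  simp only [smul_eq_mul]
  nlinarith [mul_pos (mul_pos hs ht) (mul_pos hc hsq)]

noncomputable def scadL2Penalty (a lam1 lam2 θ : ℝ) : ℝ :=
  lam1 * fSCAD a lam1 |θ| + lam2 * θ ^ 2

lemma strictConvexOn_scadL2Penalty {a lam1 lam2 : ℝ} (ha : 1 < a) (hlam1 : 0 < lam1)
    (hlam2 : 1 / (2 * (a - 1)) < lam2) :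
    StrictConvexOn ℝ univ (scadL2Penalty a lam1 lam2) := by
  set φ : ℝ → ℝ := fun u => lam1 * fSCAD a lam1 u + u ^ 2 / (2 * (a - 1))
  have hsplit : scadL2Penalty a lam1 lam2
      = φ ∘ (|·|) + fun θ => (lam2 - 1 / (2 * (a - 1))) * θ ^ 2 := by
    funext θ
    simp only [φ, scadL2Penalty, Function.comp_apply, Pi.add_apply, sq_abs]
    ring
  have habs : (|·|) '' univ = Ici (0 : ℝ) := by
    ext x
    exact ⟨fun ⟨y, _, hy⟩ => hy ▸ abs_nonneg y, fun hx => ⟨x, mem_univ x, abs_of_nonneg hx⟩⟩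
  have hconv : ConvexOn ℝ univ (φ ∘ (|·|)) :=
    ConvexOn.comp (habs ▸ (convexOn_scad_add_sq ha hlam1).subset (subset_univ _) (convex_Ici 0))
      (convexOn_norm convex_univ) (habs ▸ monotoneOn_scad_add_sq ha hlam1)
  rw [hsplit]
  exact hconv.add_strictConvexOn (strictConvexOn_const_mul_sq (sub_pos.2 hlam2))

lemma Matrix.mulVec_comp_swap_of_col_eq {m n R : Type*} [Fintype n] [DecidableEq n]
    [NonUnitalNonAssocSemiring R] {X : Matrix m n R} {l k : n} (hcol : ∀ i, X i l = X i k)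
    (v : n → R) : X *ᵥ (v ∘ Equiv.swap l k) = X *ᵥ v := by
  have hX : ∀ i j, X i (Equiv.swap l k j) = X i j := by
    intro i j
    rcases eq_or_ne j l with rfl | hl
    · rw [Equiv.swap_apply_left, hcol]
    rcases eq_or_ne j k with rfl | hk
    · rw [Equiv.swap_apply_right, hcol]
    · rw [Equiv.swap_apply_of_ne_of_ne hl hk]
  funext i
  simp only [Matrix.mulVec, dotProduct, Function.comp_apply]
  rw [← Equiv.sum_comp (Equiv.swap l k) (fun j => X i j * v j)]
  simp only [hX]

theorem grouping_of_strictConvexOn {n p : ℕ} {g : ℝ → ℝ} (hg : StrictConvexOn ℝ univ g)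
    (F : (Fin n → ℝ) → ℝ) (X : Matrix (Fin n) (Fin p) ℝ) {l k : Fin p}
    (hcol : ∀ i, X i l = X i k) (βhat : Fin p → ℝ)
    (hmin : ∀ β : Fin p → ℝ, F (X *ᵥ βhat) + ∑ j, g (βhat j) ≤ F (X *ᵥ β) + ∑ j, g (β j)) :
    βhat l = βhat k := by
  by_contra hne
  set σ := Equiv.swap l k
  set βmid : Fin p → ℝ := (1 / 2 : ℝ) • βhat + (1 / 2 : ℝ) • (βhat ∘ σ)
  have hX : X *ᵥ βmid = X *ᵥ βhat := by
    rw [Matrix.mulVec_add, Matrix.mulVec_smul, Matrix.mulVec_smul,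
      Matrix.mulVec_comp_swap_of_col_eq hcol, ← add_smul]
    norm_num
  have hpen : ∑ j, g (βmid j) < ∑ j, g (βhat j) :=
    calc ∑ j, g (βmid j) < ∑ j, ((1 / 2 : ℝ) * g (βhat j) + (1 / 2 : ℝ) * g (βhat (σ j))) := by
          refine Finset.sum_lt_sum (fun j _ => hg.convexOn.2 (mem_univ _) (mem_univ _)
            (by norm_num) (by norm_num) (by norm_num)) ⟨l, Finset.mem_univ l, ?_⟩
          exact hg.2 (mem_univ _) (mem_univ _) (by simpa [σ] using hne)
            (by norm_num) (by norm_num) (by norm_num)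
      _ = ∑ j, g (βhat j) := by
          rw [Finset.sum_add_distrib, ← Finset.mul_sum, ← Finset.mul_sum,
            Equiv.sum_comp σ (fun j => g (βhat j))]
          ring
  linarith [hX ▸ hmin βmid]

theorem grouping_effect_scad_l2_general
    (a lam1 : ℝ) (ha : 2 < a) (hlam1 : 0 < lam1)
    (n p : ℕ)
    (F : (Fin n → ℝ) → ℝ) (lam2 : ℝ) (hlam2 : 1 / (2 * (a - 1)) < lam2)
    (X : Matrix (Fin n) (Fin p) ℝ) (l k : Fin p)
    (hcol : ∀ i : Fin n, X i l = X i k)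
    (βhat : Fin p → ℝ)
    (hmin : ∀ β : Fin p → ℝ,
      F (X.mulVec βhat) + ∑ j, (lam1 * fSCAD a lam1 |βhat j| + lam2 * (βhat j) ^ 2)
        ≤ F (X.mulVec β) + ∑ j, (lam1 * fSCAD a lam1 |β j| + lam2 * (β j) ^ 2)) :
    βhat l = βhat k :=
  grouping_of_strictConvexOn (strictConvexOn_scadL2Penalty (by linarith) hlam1 hlam2)
    F X hcol βhat hmin

/-- Grouping effect for the SCAD_L2 penalty. -/
theorem grouping_effect_scad_l2
    (a lam1 : ℝ) (ha : 2 < a) (hlam1 : 0 < lam1)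
    (n p : ℕ) (hn : 1 ≤ n) (hp : 1 ≤ p)
    (F : (Fin n → ℝ) → ℝ) (lam2 : ℝ) (hlam2 : 1 / (2 * (a - 1)) < lam2)
    (X : Matrix (Fin n) (Fin p) ℝ) (l k : Fin p) (hlk : l ≠ k)
    (hcol : ∀ i : Fin n, X i l = X i k)
    (βhat : Fin p → ℝ)
    (hmin : ∀ β : Fin p → ℝ,
      F (X.mulVec βhat) + ∑ j, (lam1 * fSCAD a lam1 |βhat j| + lam2 * (βhat j) ^ 2)
        ≤ F (X.mulVec β) + ∑ j, (lam1 * fSCAD a lam1 |β j| + lam2 * (β j) ^ 2)) :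
    βhat l = βhat k :=
  grouping_effect_scad_l2_general a lam1 ha hlam1 n p F lam2 hlam2 X l k hcol βhat hmin
end
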